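/- arXiv:2212.01234 — 2 statements merged into one kernel-verified Lean document; each statement's English description precedes it below -/
import Mathlib

section
/- If a permutation w ∈ S_n contains the pattern 3412 exactly once (i.e., there is exactly one 4-element index set realizing 3412) and avoids the pattern 321, then w avoids all 21 of the following patterns: 24531, 25314, 25341, 34512, 34521, 35412, 35421, 42531, 45123, 45213, 45231, 45312, 52314, 52341, 53124, 53142, 53412, 53421, 54123, 54213, 54231. -/
/-- Build a permutation of `Fin 5` from its one-line notation (0-indexed values). -/
noncomputable def mk5 (v : Fin 5 → Fin 5) (h : Function.Bijective v := by decide) :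
    Equiv.Perm (Fin 5) := Equiv.ofBijective v h

/-- `w` contains the pattern `σ`. -/
def ContainsPat {n k : ℕ} (w : Equiv.Perm (Fin n)) (σ : Equiv.Perm (Fin k)) : Prop :=
  ∃ f : Fin k ↪o Fin n, ∀ a b : Fin k, σ a < σ b ↔ w (f a) < w (f b)

/-- `w` contains the pattern 3412 at the index set given by `f`. -/
def Occ3412 {n : ℕ} (w : Equiv.Perm (Fin n)) (f : Fin 4 ↪o Fin n) : Prop :=
  w (f 2) < w (f 3) ∧ w (f 3) < w (f 0) ∧ w (f 0) < w (f 1)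

/-- `w` avoids the pattern 321. -/
def Avoids321 {n : ℕ} (w : Equiv.Perm (Fin n)) : Prop :=
  ¬ ∃ i j k : Fin n, i < j ∧ j < k ∧ w k < w j ∧ w j < w i

/- Both conditions pass from `w` down to every pattern it contains: a 321 in a pattern of `w`
is a 321 in `w`, and two distinct occurrences of 3412 in a pattern of `w` give two distinct
occurrences in `w`. Each of the 21 patterns either contains 321 or, like 34512 and 45123,
contains 3412 twice. -/

instance {n : ℕ} : DecidablePred (Avoids321 (n := n)) := fun w => by
  unfold Avoids321; infer_instance

theorem Avoids321.of_containsPat {n k : ℕ} {w : Equiv.Perm (Fin n)} {σ : Equiv.Perm (Fin k)}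
    (hw : Avoids321 w) (hwσ : ContainsPat w σ) : Avoids321 σ := by
  rintro ⟨i, j, l, hij, hjl, hlj, hji⟩
  obtain ⟨f, hf⟩ := hwσ
  exact hw ⟨f i, f j, f l, f.strictMono hij, f.strictMono hjl, (hf l j).mp hlj, (hf j i).mp hji⟩

theorem Occ3412.trans {n k : ℕ} {w : Equiv.Perm (Fin n)} {σ : Equiv.Perm (Fin k)}
    {f : Fin k ↪o Fin n} (hf : ∀ a b, σ a < σ b ↔ w (f a) < w (f b)) {g : Fin 4 ↪o Fin k}
    (hg : Occ3412 σ g) : Occ3412 w (g.trans f) :=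
  ⟨(hf _ _).mp hg.1, (hf _ _).mp hg.2.1, (hf _ _).mp hg.2.2⟩

theorem not_containsPat_of_existsUnique_occ3412 {n k : ℕ} {w : Equiv.Perm (Fin n)}
    {σ : Equiv.Perm (Fin k)} (hw : ∃! f : Fin 4 ↪o Fin n, Occ3412 w f) {g₁ g₂ : Fin 4 ↪o Fin k}
    (hne : g₁ ≠ g₂) (h₁ : Occ3412 σ g₁) (h₂ : Occ3412 σ g₂) : ¬ ContainsPat w σ := by
  rintro ⟨f, hf⟩
  have heq : g₁.trans f = g₂.trans f := hw.unique (h₁.trans hf) (h₂.trans hf)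
  exact hne (RelEmbedding.ext fun a => f.injective (DFunLike.congr_fun heq a))

/-- If `w` contains the pattern 3412 exactly once and avoids the pattern 321,
then `w` avoids all 21 listed patterns. -/
theorem stmt3 {n : ℕ} (w : Equiv.Perm (Fin n))
    (h1 : ∃! f : Fin 4 ↪o Fin n, Occ3412 w f) (h2 : Avoids321 w) :
    ∀ σ ∈ [mk5 ![1,3,4,2,0], mk5 ![1,4,2,0,3], mk5 ![1,4,2,3,0], mk5 ![2,3,4,0,1],
           mk5 ![2,3,4,1,0], mk5 ![2,4,3,0,1], mk5 ![2,4,3,1,0], mk5 ![3,1,4,2,0],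
           mk5 ![3,4,0,1,2], mk5 ![3,4,1,0,2], mk5 ![3,4,1,2,0], mk5 ![3,4,2,0,1],
           mk5 ![4,1,2,0,3], mk5 ![4,1,2,3,0], mk5 ![4,2,0,1,3], mk5 ![4,2,0,3,1],
           mk5 ![4,2,3,0,1], mk5 ![4,2,3,1,0], mk5 ![4,3,0,1,2], mk5 ![4,3,1,0,2],
           mk5 ![4,3,1,2,0]],
      ¬ ContainsPat w σ := by
  intro σ hσ hwσ
  simp only [List.mem_cons, List.not_mem_nil, or_false] at hσ
  rcases hσ with rfl|rfl|rfl|rfl|rfl|rfl|rfl|rfl|rfl|rfl|rfl|rfl|rfl|rfl|rfl|rfl|rfl|rfl|rfl|rfl|rfl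
  all_goals first
    | exact absurd (h2.of_containsPat hwσ) (by decide)
    | skip
  · exact not_containsPat_of_existsUnique_occ3412 h1 (g₁ := Fin.succAboveOrderEmb 2)
      (g₂ := Fin.succAboveOrderEmb 1) (DFunLike.ne_iff.2 ⟨1, by decide⟩)
      ⟨by decide, by decide, by decide⟩ ⟨by decide, by decide, by decide⟩ hwσ
  · exact not_containsPat_of_existsUnique_occ3412 h1 (g₁ := Fin.succAboveOrderEmb 4)
      (g₂ := Fin.succAboveOrderEmb 3) (DFunLike.ne_iff.2 ⟨3, by decide⟩)
      ⟨by decide, by decide, by decide⟩ ⟨by decide, by decide, by decide⟩ hwσ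
end

section
/- For n ≥ 5, the number of Dyck paths of size n having exactly one peak on the third diagonal (the line y = x + 3) and no peaks on any diagonal y = x + r with r ≥ 4 equals (n−2)·2^{n−3}. -/
/-!
A point of maximal height `y − x` on a Dyck path is a peak. Hence a Dyck path has exactly one peak
on the diagonal `y = x + 3` and none higher iff its height stays at most `3` and equals `3` at a
single time, necessarily odd, say `2k + 1`. Cutting out the peak there leaves a path of length
`2k` from height `0` to height `2` and one of length `2(n − k − 1)` from height `2` to height
`0`, both in the strip `0 ≤ height ≤ 2`. In that strip every step taken from height `0` or `2`
is forced while a step from height `1` is free, so there are `2^(k−1)` and `2^(n−k−2)` such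
paths, and summing `2^(n−3)` over `1 ≤ k ≤ n − 2` gives `(n − 2)·2^(n−3)`.
-/

/-- The number of North steps among the first `k` steps of the path `p`
(`true` = North step, `false` = East step). -/
def northCount {m : ℕ} (p : Fin m → Bool) (k : ℕ) : ℕ :=
  (Finset.univ.filter fun i : Fin m => (i : ℕ) < k ∧ p i = true).card

/-- `p` is a Dyck path of size `n`: a path of `2n` unit steps from `(0,0)` to `(n,n)`
staying weakly above the diagonal `y = x` (every prefix has at least as many North
steps as East steps). -/
def IsDyck {n : ℕ} (p : Fin (2 * n) → Bool) : Prop :=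
  northCount p (2 * n) = n ∧ ∀ k ≤ 2 * n, k ≤ 2 * northCount p k

/-- The step `i` is a North step immediately followed by an East step, so the lattice
point reached after `i+1` steps is a peak of the path. -/
def IsPeak {n : ℕ} (p : Fin (2 * n) → Bool) (i : Fin (2 * n)) : Prop :=
  ∃ j : Fin (2 * n), (j : ℕ) = (i : ℕ) + 1 ∧ p i = true ∧ p j = false

/-- The peak with apex after step `i` lies on the diagonal `y = x + r`,
i.e. `y − x = r` where `y = northCount p (i+1)` and `x = (i+1) − y`. -/
def PeakOnDiag {n : ℕ} (p : Fin (2 * n) → Bool) (i : Fin (2 * n)) (r : ℕ) : Prop :=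
  IsPeak p i ∧ 2 * northCount p ((i : ℕ) + 1) = (i : ℕ) + 1 + r

lemma Nat.forall_le_add_one_iff {P : ℕ → Prop} {L : ℕ} :
    (∀ t ≤ L + 1, P t) ↔ P 0 ∧ ∀ t ≤ L, P (t + 1) := by
  refine ⟨fun h => ⟨h 0 (by omega), fun t ht => h (t + 1) (by omega)⟩, ?_⟩
  rintro ⟨h0, hs⟩ (_ | t) ht
  exacts [h0, hs t (by omega)]

def northSteps (l : List Bool) (t : ℕ) : ℕ := (l.take t).count true

@[simp] lemma northSteps_zero (l : List Bool) : northSteps l 0 = 0 := rfl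

lemma northSteps_cons_succ (b : Bool) (l : List Bool) (t : ℕ) :
    northSteps (b :: l) (t + 1) = b.toNat + northSteps l t := by
  cases b <;> simp [northSteps, add_comm]

lemma northSteps_succ {l : List Bool} {t : ℕ} (h : t < l.length) :
    northSteps l (t + 1) = northSteps l t + l[t].toNat := by
  cases hb : l[t] <;> simp [northSteps, List.take_add_one, List.getElem?_eq_getElem h, hb]

lemma northSteps_succ_of_length_le {l : List Bool} {t : ℕ} (h : l.length ≤ t) :
    northSteps l (t + 1) = northSteps l t := by
  simp [northSteps, List.take_of_length_le h, List.take_of_length_le (h.trans t.le_succ)]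

lemma northSteps_append_of_le {u : List Bool} (v : List Bool) {t : ℕ} (h : t ≤ u.length) :
    northSteps (u ++ v) t = northSteps u t := by
  simp [northSteps, List.take_append, Nat.sub_eq_zero_of_le h]

lemma northSteps_append_length_add (u v : List Bool) (s : ℕ) :
    northSteps (u ++ v) (u.length + s) = northSteps u u.length + northSteps v s := by
  simp [northSteps, List.take_append, List.take_of_length_le]

lemma northCount_zero {m : ℕ} (p : Fin m → Bool) : northCount p 0 = 0 := by
  simp [northCount]

lemma northCount_succ_of_lt {m : ℕ} (p : Fin m → Bool) {k : ℕ} (hk : k < m) :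
    northCount p (k + 1) = northCount p k + (p ⟨k, hk⟩).toNat := by
  unfold northCount
  cases hp : p ⟨k, hk⟩
  · rw [Bool.toNat_false, add_zero]
    refine congrArg Finset.card (Finset.filter_congr fun i _ => ?_)
    have : (i : ℕ) = k → p i = false := fun h => (congrArg p (Fin.ext h)).trans hp
    grind
  · rw [Bool.toNat_true, ← Finset.card_insert_of_notMem (a := ⟨k, hk⟩) (by simp)]
    congr 1
    ext i
    simp only [Finset.mem_filter, Finset.mem_univ, true_and, Finset.mem_insert, Fin.ext_iff]
    grind

lemma northCount_succ_of_le {m : ℕ} (p : Fin m → Bool) {k : ℕ} (hk : m ≤ k) :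
    northCount p (k + 1) = northCount p k := by
  unfold northCount
  refine congrArg Finset.card (Finset.filter_congr fun i _ => ?_)
  grind

lemma northCount_eq_northSteps {m : ℕ} (p : Fin m → Bool) :
    northCount p = northSteps (List.ofFn p) := by
  funext k
  induction k with
  | zero => rw [northCount_zero, northSteps_zero]
  | succ k ih =>
    rcases lt_or_ge k m with hk | hk
    · rw [northCount_succ_of_lt p hk, northSteps_succ (by simpa), ih, List.getElem_ofFn]
    · rw [northCount_succ_of_le p hk, northSteps_succ_of_length_le (by simpa), ih]

/-- With `c s` the number of North steps among the first `s` steps, the height `y − x` after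
`s` steps is `2 * c s - s`: it equals `3` at time `t` and is at most `2` at every other time. -/
def TouchesThreeOnceAt (c : ℕ → ℕ) (m t : ℕ) : Prop :=
  t ≤ m ∧ 2 * c t = t + 3 ∧ ∀ s ≤ m, s ≠ t → 2 * c s ≤ s + 2

lemma TouchesThreeOnceAt.unique {c : ℕ → ℕ} {m t t' : ℕ} (h : TouchesThreeOnceAt c m t)
    (h' : TouchesThreeOnceAt c m t') : t = t' := by
  by_contra hne
  have := h.2.2 t' h'.1 (Ne.symm hne)
  have := h'.2.1
  omega

section Peaks

variable {n : ℕ} {p : Fin (2 * n) → Bool}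

/-- A highest point of the path (`hmax`, with the heights compared without subtraction) is the
apex of a peak. -/
lemma peakOnDiag_of_forall_height_le {t r : ℕ} (ht₀ : 0 < t) (ht : t < 2 * n)
    (hr : 2 * northCount p t = t + r)
    (hmax : ∀ s ≤ 2 * n, 2 * northCount p s + t ≤ 2 * northCount p t + s) :
    PeakOnDiag p ⟨t - 1, by omega⟩ r := by
  have hup := northCount_succ_of_lt p (k := t - 1) (by omega)
  have hdown := northCount_succ_of_lt p ht
  rw [Nat.sub_add_cancel ht₀] at hup
  have := hmax (t - 1) (by omega)
  have := hmax (t + 1) (by omega)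
  refine ⟨⟨⟨t, ht⟩, by simp; omega, Bool.toNat_eq_one.1 ?_, Bool.toNat_eq_zero.1 (by omega)⟩,
    by simp [Nat.sub_add_cancel ht₀, hr]⟩
  have := Bool.toNat_le (p ⟨t - 1, by omega⟩)
  omega

lemma exists_peakOnDiag_of_height_ge (hp : IsDyck p) {r : ℕ} (hr : 0 < r)
    (h : ∃ t ≤ 2 * n, t + r ≤ 2 * northCount p t) :
    ∃ (i : Fin (2 * n)) (r' : ℕ), r ≤ r' ∧ PeakOnDiag p i r' := by
  obtain ⟨t, ht, htop⟩ := (Finset.range (2 * n + 1)).exists_max_image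
    (fun s => (2 * northCount p s : ℤ) - s) ⟨0, by simp⟩
  simp only [Finset.mem_range, Nat.lt_succ_iff] at ht htop
  obtain ⟨s, hs, hsr⟩ := h
  have hts := htop s hs
  have ht₀ : t ≠ 0 := by rintro rfl; rw [northCount_zero] at hts; omega
  have ht₁ : t ≠ 2 * n := by rintro rfl; rw [hp.1] at hts; omega
  refine ⟨_, 2 * northCount p t - t, by omega,
    peakOnDiag_of_forall_height_le (t := t) (by omega) (by omega) (by omega) fun s' hs' => ?_⟩
  have := htop s' hs'
  omega

lemma peaks_iff_exists_touchesThreeOnceAt (hp : IsDyck p) :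
    ((∃! i : Fin (2 * n), PeakOnDiag p i 3) ∧
      ¬ ∃ (i : Fin (2 * n)) (r : ℕ), 4 ≤ r ∧ PeakOnDiag p i r) ↔
      ∃ t, TouchesThreeOnceAt (northCount p) (2 * n) t := by
  have h0 := northCount_zero p
  have h2n := hp.1
  constructor
  · rintro ⟨⟨i, hi, huniq⟩, hhigh⟩
    have hle : ∀ s ≤ 2 * n, 2 * northCount p s ≤ s + 3 := by
      by_contra! ⟨s, hs, hs4⟩
      exact hhigh (exists_peakOnDiag_of_height_ge hp (r := 4) (by norm_num) ⟨s, hs, by omega⟩)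
    refine ⟨i + 1, by omega, hi.2, fun s hs hsi => ?_⟩
    by_contra! hs3
    have hs₀ : s ≠ 0 := by rintro rfl; omega
    have hs₁ : s ≠ 2 * n := by rintro rfl; omega
    have hpeak := peakOnDiag_of_forall_height_le (p := p) (t := s) (r := 3) (by omega) (by omega)
      (by have := hle s hs; omega) fun s' hs' => by have := hle s' hs'; omega
    have := congrArg Fin.val (huniq _ hpeak)
    simp only at this
    omega
  · rintro ⟨t, ht, ht3, hle⟩
    have ht₀ : t ≠ 0 := by rintro rfl; omega
    have ht₁ : t ≠ 2 * n := by rintro rfl; omega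
    refine ⟨⟨_, peakOnDiag_of_forall_height_le (t := t) (by omega) (by omega) ht3 fun s hs => ?_,
      fun j hj => ?_⟩, ?_⟩
    · rcases eq_or_ne s t with rfl | hst
      · rfl
      · have := hle s hs hst; omega
    · have hj3 := hj.2
      have : (j : ℕ) + 1 = t := by
        by_contra hne
        have := hle _ (by omega) hne
        omega
      exact Fin.ext (by simp only; omega)
    · rintro ⟨i, r, hr, hi⟩
      have := hi.2
      rcases eq_or_ne ((i : ℕ) + 1) t with rfl | h
      · omega
      · have := hle _ (by omega) h
        omega

end Peaks

/-- A path started at height `h` has height `h + 2 * northSteps l t - t` after `t` steps;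
`IsStripPath L h e l`: `l` has length `L`, keeps its height in `[0, 2]` and ends at height `e`. -/
def IsStripPath (L h e : ℕ) (l : List Bool) : Prop :=
  l.length = L ∧ (∀ t ≤ L, t ≤ h + 2 * northSteps l t ∧ h + 2 * northSteps l t ≤ t + 2) ∧
    h + 2 * northSteps l L = L + e

lemma isStripPath_cons_true {L h e : ℕ} {l : List Bool} :
    IsStripPath (L + 1) h e (true :: l) ↔ h < 2 ∧ IsStripPath L (h + 1) e l := by
  simp only [IsStripPath, Nat.forall_le_add_one_iff, northSteps_cons_succ, northSteps_zero,
    List.length_cons, Bool.toNat_true]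
  constructor
  · rintro ⟨hl, ⟨-, hb⟩, he⟩
    have := hb 0 L.zero_le
    simp only [northSteps_zero] at this
    refine ⟨by omega, by omega, fun t ht => ?_, by omega⟩
    have := hb t ht; omega
  · rintro ⟨h0, hl, hb, he⟩
    refine ⟨by omega, ⟨by omega, fun t ht => ?_⟩, by omega⟩
    have := hb t ht; omega

lemma isStripPath_cons_false {L h e : ℕ} {l : List Bool} (hh : h ≤ 2) :
    IsStripPath (L + 1) h e (false :: l) ↔ 0 < h ∧ IsStripPath L (h - 1) e l := by
  simp only [IsStripPath, Nat.forall_le_add_one_iff, northSteps_cons_succ, northSteps_zero,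
    List.length_cons, Bool.toNat_false]
  constructor
  · rintro ⟨hl, ⟨-, hb⟩, he⟩
    have := hb 0 L.zero_le
    simp only [northSteps_zero] at this
    refine ⟨by omega, by omega, fun t ht => ?_, by omega⟩
    have := hb t ht; omega
  · rintro ⟨h0, hl, hb, he⟩
    refine ⟨by omega, ⟨by omega, fun t ht => ?_⟩, by omega⟩
    have := hb t ht; omega

def stripPaths : ℕ → ℕ → ℕ → Finset (List Bool)
  | 0, h, e => if h = e then {[]} else ∅
  | L + 1, h, e =>
    (if h < 2 then (stripPaths L (h + 1) e).map ⟨List.cons true, List.cons_injective⟩ else ∅) ∪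
      (if 0 < h then (stripPaths L (h - 1) e).map ⟨List.cons false, List.cons_injective⟩ else ∅)

lemma mem_stripPaths {L h e : ℕ} {l : List Bool} (hh : h ≤ 2) :
    l ∈ stripPaths L h e ↔ IsStripPath L h e l := by
  induction L generalizing h l with
  | zero =>
    by_cases he : h = e
    · subst he; cases l <;> simp [stripPaths, IsStripPath, hh]
    · cases l <;> simp [stripPaths, IsStripPath, he]
  | succ L ih =>
    cases l with
    | nil => interval_cases h <;> simp [stripPaths, IsStripPath]
    | cons b l =>
      cases b
      · rw [isStripPath_cons_false hh]
        interval_cases h <;> simp [stripPaths, ih]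
      · rw [isStripPath_cons_true]
        interval_cases h <;> simp [stripPaths, ih]

lemma card_stripPaths_zero (h e : ℕ) : (stripPaths 0 h e).card = if h = e then 1 else 0 := by
  rw [stripPaths]; split_ifs <;> simp

lemma card_stripPaths_succ (L h e : ℕ) : (stripPaths (L + 1) h e).card =
    (if h < 2 then (stripPaths L (h + 1) e).card else 0) +
      (if 0 < h then (stripPaths L (h - 1) e).card else 0) := by
  rw [stripPaths, Finset.card_union_of_disjoint]
  · split_ifs <;> simp
  · rw [Finset.disjoint_left]
    split_ifs <;> simp

lemma card_stripPaths_odd {e : ℕ} (he : e = 0 ∨ e = 2) (k : ℕ) :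
    (stripPaths (2 * k + 1) 1 e).card = 2 ^ k := by
  induction k with
  | zero => rcases he with rfl | rfl <;> simp [card_stripPaths_succ, card_stripPaths_zero]
  | succ k ih =>
    rw [show 2 * (k + 1) + 1 = 2 * k + 1 + 1 + 1 by ring]
    simp [card_stripPaths_succ, ih, pow_succ, mul_two]

lemma card_stripPaths_even {h e : ℕ} (hh : h = 0 ∨ h = 2) (he : e = 0 ∨ e = 2) (k : ℕ) :
    (stripPaths (2 * k + 2) h e).card = 2 ^ k := by
  rcases hh with rfl | rfl <;> simp [card_stripPaths_succ, card_stripPaths_odd he]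

def IsDyckList (n : ℕ) (l : List Bool) : Prop :=
  l.length = 2 * n ∧ northSteps l (2 * n) = n ∧ ∀ k ≤ 2 * n, k ≤ 2 * northSteps l k

lemma northSteps_append_peak {u : List Bool} (v : List Bool) {L : ℕ} (hu : u.length = L) :
    (∀ s ≤ L, northSteps (u ++ true :: false :: v) s = northSteps u s) ∧
      northSteps (u ++ true :: false :: v) (L + 1) = northSteps u L + 1 ∧
      ∀ s, northSteps (u ++ true :: false :: v) (L + 2 + s) =
        northSteps u L + 1 + northSteps v s := by
  subst hu
  refine ⟨fun s hs => northSteps_append_of_le _ hs, ?_, fun s => ?_⟩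
  · simp [northSteps_append_length_add, northSteps_cons_succ]
  · rw [add_assoc, show 2 + s = s + 1 + 1 by ring]
    simp [northSteps_append_length_add, northSteps_cons_succ]
    ring

lemma isDyckList_append_peak_iff {n k : ℕ} {u v : List Bool} (hk : k < n)
    (hu : u.length = 2 * k) :
    (IsDyckList n (u ++ true :: false :: v) ∧
      TouchesThreeOnceAt (northSteps (u ++ true :: false :: v)) (2 * n) (2 * k + 1)) ↔
      IsStripPath (2 * k) 0 2 u ∧ IsStripPath (2 * n - (2 * k + 2)) 2 0 v := by
  obtain ⟨hpre, hpeak, hpost⟩ := northSteps_append_peak v hu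
  obtain ⟨m, hm⟩ : ∃ m, 2 * n = 2 * k + 2 + m := ⟨2 * n - (2 * k + 2), by omega⟩
  simp only [IsDyckList, TouchesThreeOnceAt, IsStripPath, List.length_append, List.length_cons,
    hu, hm, zero_add, add_zero, show 2 * k + 2 + m - (2 * k + 2) = m by omega]
  constructor
  · rintro ⟨⟨hlen, hend, hlow⟩, -, h3, hle⟩
    refine ⟨⟨trivial, fun s hs => ?_, by omega⟩, ⟨by omega, fun s hs => ?_, ?_⟩⟩
    · have := hlow s (by omega)
      have := hle s (by omega) (by omega)
      rw [hpre s hs] at *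
      omega
    · have := hlow (2 * k + 2 + s) (by omega)
      have := hle (2 * k + 2 + s) (by omega) (by omega)
      rw [hpost s] at *
      omega
    · rw [hpost m] at hend
      omega
  · rintro ⟨⟨-, hub, hue⟩, hvlen, hvb, hve⟩
    have hbound : ∀ s ≤ 2 * k + 2 + m, s ≤ 2 * northSteps (u ++ true :: false :: v) s ∧
        (s ≠ 2 * k + 1 → 2 * northSteps (u ++ true :: false :: v) s ≤ s + 2) := by
      intro s hs
      rcases le_or_gt s (2 * k) with h | h
      · have := hub s h
        rw [hpre s h]
        omega
      rcases lt_or_ge s (2 * k + 2) with h' | h'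
      · obtain rfl : s = 2 * k + 1 := by omega
        omega
      · obtain ⟨s', rfl⟩ := Nat.exists_eq_add_of_le h'
        have := hvb s' (by omega)
        rw [hpost s']
        omega
    have hend := hpost m
    exact ⟨⟨by omega, by omega, fun s hs => (hbound s hs).1⟩, by omega, by omega,
      fun s hs => (hbound s hs).2⟩

lemma eq_take_append_peak {l : List Bool} {t : ℕ} (h : t + 1 < l.length) (hup : l[t] = true)
    (hdown : l[t + 1] = false) : l = l.take t ++ true :: false :: l.drop (t + 2) := by
  conv_lhs => rw [← List.take_append_drop t l, List.drop_eq_getElem_cons (by omega),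
    List.drop_eq_getElem_cons h]
  rw [hup, hdown]

def touchingThreeAt (n k : ℕ) : Finset (List Bool) :=
  (stripPaths (2 * k) 0 2 ×ˢ stripPaths (2 * n - (2 * k + 2)) 2 0).image
    fun uv => uv.1 ++ true :: false :: uv.2

lemma mem_touchingThreeAt {n k : ℕ} {l : List Bool} (hk : k < n) :
    l ∈ touchingThreeAt n k ↔
      IsDyckList n l ∧ TouchesThreeOnceAt (northSteps l) (2 * n) (2 * k + 1) := by
  simp only [touchingThreeAt, Finset.mem_image, Finset.mem_product, Prod.exists,
    mem_stripPaths (Nat.zero_le 2), mem_stripPaths le_rfl]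
  constructor
  · rintro ⟨u, v, huv, rfl⟩
    exact (isDyckList_append_peak_iff hk huv.1.1).2 huv
  · intro hl
    have hlen := hl.1.1
    obtain ⟨-, h3, hle⟩ := hl.2
    have hup := northSteps_succ (l := l) (t := 2 * k) (by omega)
    have hdown := northSteps_succ (l := l) (t := 2 * k + 1) (by omega)
    have := hle (2 * k) (by omega) (by omega)
    have := hle (2 * k + 1 + 1) (by omega) (by omega)
    have hup' : l[2 * k] = true :=
      Bool.toNat_eq_one.1 (by have := Bool.toNat_le l[2 * k]; omega)
    have hdown' : l[2 * k + 1] = false := Bool.toNat_eq_zero.1 (by omega)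
    have hsplit := eq_take_append_peak (by omega) hup' hdown'
    rw [hsplit] at hl
    exact ⟨_, _, (isDyckList_append_peak_iff hk (by simp; omega)).1 hl, hsplit.symm⟩

lemma card_touchingThreeAt (n k : ℕ) :
    (touchingThreeAt n k).card = if 1 ≤ k ∧ k + 2 ≤ n then 2 ^ (n - 3) else 0 := by
  rw [touchingThreeAt, Finset.card_image_of_injOn, Finset.card_product]
  · split_ifs with h
    · obtain ⟨a, rfl⟩ : ∃ a, k = a + 1 := ⟨k - 1, by omega⟩
      obtain ⟨b, rfl⟩ : ∃ b, n = a + b + 3 := ⟨n - a - 3, by omega⟩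
      rw [show 2 * (a + 1) = 2 * a + 2 by ring,
        show 2 * (a + b + 3) - (2 * a + 2 + 2) = 2 * b + 2 by omega,
        card_stripPaths_even (by simp) (by simp), card_stripPaths_even (by simp) (by simp),
        ← pow_add]
      congr 1
    · rcases (by omega : k = 0 ∨ n ≤ k + 1) with rfl | h
      · simp [card_stripPaths_zero]
      · simp [show 2 * n - (2 * k + 2) = 0 by omega, card_stripPaths_zero]
  · rintro ⟨u, v⟩ huv ⟨u', v'⟩ huv' heq
    simp only [Finset.coe_product, Set.mem_prod, Finset.mem_coe] at huv huv'
    have hu := ((mem_stripPaths (by norm_num)).1 huv.1).1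
    have hu' := ((mem_stripPaths (by norm_num)).1 huv'.1).1
    obtain ⟨rfl, h⟩ := List.append_inj heq (hu.trans hu'.symm)
    simpa using h

def touchingThreeOnce (n : ℕ) : Finset (List Bool) :=
  (Finset.range n).biUnion (touchingThreeAt n)

lemma mem_touchingThreeOnce {n : ℕ} {l : List Bool} :
    l ∈ touchingThreeOnce n ↔
      IsDyckList n l ∧ ∃ t, TouchesThreeOnceAt (northSteps l) (2 * n) t := by
  simp only [touchingThreeOnce, Finset.mem_biUnion, Finset.mem_range]
  constructor
  · rintro ⟨k, hk, hl⟩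
    exact ⟨((mem_touchingThreeAt hk).1 hl).1, _, ((mem_touchingThreeAt hk).1 hl).2⟩
  · rintro ⟨hl, t, ht⟩
    obtain ⟨k, rfl⟩ : ∃ k, t = 2 * k + 1 := ⟨t / 2, by have := ht.2.1; omega⟩
    have hk : k < n := by have := ht.1; omega
    exact ⟨k, hk, (mem_touchingThreeAt hk).2 ⟨hl, ht⟩⟩

lemma card_touchingThreeOnce (n : ℕ) : (touchingThreeOnce n).card = (n - 2) * 2 ^ (n - 3) := by
  rw [touchingThreeOnce, Finset.card_biUnion]
  · simp_rw [card_touchingThreeAt, ← Finset.sum_filter, Finset.sum_const, smul_eq_mul]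
    congr
    rw [show (Finset.range n).filter (fun k => 1 ≤ k ∧ k + 2 ≤ n) = Finset.Ico 1 (n - 1) by
      ext; simp; omega]
    simp only [Nat.card_Ico]
    omega
  · intro k hk k' hk' hne
    simp only [Finset.mem_coe, Finset.mem_range] at hk hk'
    refine Finset.disjoint_left.2 fun l hl hl' => hne ?_
    have := ((mem_touchingThreeAt hk).1 hl).2.unique ((mem_touchingThreeAt hk').1 hl').2
    omega

lemma isDyck_iff_isDyckList {n : ℕ} (p : Fin (2 * n) → Bool) :
    IsDyck p ↔ IsDyckList n (List.ofFn p) := by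
  simp [IsDyck, IsDyckList, northCount_eq_northSteps]

lemma card_subtype_ofFn_mem {α : Type*} {m : ℕ} (s : Finset (List α))
    (hs : ∀ l ∈ s, l.length = m) :
    Nat.card {f : Fin m → α // List.ofFn f ∈ s} = s.card := by
  rw [← Nat.card_eq_finsetCard]
  refine Nat.card_congr <| Equiv.trans ?_ (Equiv.subtypeSubtypeEquivSubtype (hs _))
  exact (Equiv.vectorEquivFin α m).symm.subtypeEquiv (p := fun f => List.ofFn f ∈ s)
    fun f => by rw [← List.Vector.toList_ofFn]; rfl

theorem stmt15_general (n : ℕ) :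
    Nat.card {p : Fin (2 * n) → Bool // IsDyck p ∧
      (∃! i : Fin (2 * n), PeakOnDiag p i 3) ∧
      ¬ ∃ (i : Fin (2 * n)) (r : ℕ), 4 ≤ r ∧ PeakOnDiag p i r} =
    (n - 2) * 2 ^ (n - 3) := by
  calc _ = Nat.card {p : Fin (2 * n) → Bool // List.ofFn p ∈ touchingThreeOnce n} :=
        Nat.card_congr <| Equiv.subtypeEquivRight fun p => by
          rw [mem_touchingThreeOnce, ← isDyck_iff_isDyckList, ← northCount_eq_northSteps]
          exact and_congr_right peaks_iff_exists_touchesThreeOnceAt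
    _ = (touchingThreeOnce n).card :=
        card_subtype_ofFn_mem _ fun _ hl => (mem_touchingThreeOnce.1 hl).1.1
    _ = (n - 2) * 2 ^ (n - 3) := card_touchingThreeOnce n

/-- For `n ≥ 5`, the number of Dyck paths of size `n` with exactly one peak on the
third diagonal `y = x + 3` and no peak on any diagonal `y = x + r` with `r ≥ 4`
equals `(n−2)·2^{n−3}`. -/
theorem stmt15 (n : ℕ) (hn : 5 ≤ n) :
    Nat.card {p : Fin (2 * n) → Bool // IsDyck p ∧
      (∃! i : Fin (2 * n), PeakOnDiag p i 3) ∧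
      ¬ ∃ (i : Fin (2 * n)) (r : ℕ), 4 ≤ r ∧ PeakOnDiag p i r} =
    (n - 2) * 2 ^ (n - 3) :=
  stmt15_general n
end
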